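/- arXiv:1402.6914 — 7 statements merged into one kernel-verified Lean document; each statement's English description precedes it below -/
import Mathlib

section
/- Let m, n ≥ 1, let party A have m measurements where measurement x has v_x ≥ 1 outcomes, and let party B have n measurements where measurement y has w_y ≥ 1 outcomes, and let P(ab|xy) be a behavior for this scenario. Then there exists a joint distribution Q(a_1…a_m b_1…b_n) (a nonnegative function of tuples with a_x ∈ {1,…,v_x} and b_y ∈ {1,…,w_y}, summing to 1) reproducing P as marginals, i.e. P(ab|xy) = Σ over all tuples with a_x = a and b_y = b of Q(a_1…a_m b_1…b_n) for all a,b,x,y, if and only if there exist n nonnegative functions R_y(a_1…a_m, b) (one for each y ∈ {1,…,n}, with b ∈ {1,…,w_y}), each summing to 1, such that (i) P(ab|xy) = Σ_{a_1,…,a_m with a_x = a} R_y(a_1…a_m, b) for all a,b,x,y, and (ii) the marginal Σ_b R_y(a_1…a_m, b) is the same function of (a_1,…,a_m) for every y. -/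
open Finset

lemma sum_split {n : ℕ} (w : Fin n → ℕ) (y : Fin n) (b : Fin (w y))
    (f : (y' : Fin n) → Fin (w y') → ℝ) :
    (∑ β : ((y' : Fin n) → Fin (w y')), (if β y = b then ∏ y', f y' (β y') else 0))
      = f y b * ∏ j : {j : Fin n // j ≠ y}, ∑ b', f j b' := by
  classical
  set e := Equiv.piSplitAt y (fun y' => Fin (w y')) with he
  have hy : ∀ p, e.symm p y = p.1 := fun p => congrArg Prod.fst (e.apply_symm_apply p)
  have hj : ∀ p (j : {j : Fin n // j ≠ y}), e.symm p (j : Fin n) = p.2 j :=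
    fun p j => congrFun (congrArg Prod.snd (e.apply_symm_apply p)) j
  rw [← Equiv.sum_comp e.symm, Fintype.sum_prod_type]
  have h1 : ∀ (b' : Fin (w y)) (γ : (j : {j : Fin n // j ≠ y}) → Fin (w j)),
      (∏ y', f y' (e.symm (b', γ) y')) = f y b' * ∏ j : {j : Fin n // j ≠ y}, f j (γ j) := by
    intro b' γ
    rw [Fintype.prod_eq_mul_prod_compl y]
    congr 1
    · rw [hy]
    · rw [Finset.prod_subtype ({y}ᶜ : Finset (Fin n)) (p := fun j => j ≠ y)
        (fun j => by simp) (fun j => f j (e.symm (b', γ) j))]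
      exact Finset.prod_congr rfl fun j _ => by rw [hj]
  calc (∑ b' : Fin (w y), ∑ γ : ((j : {j : Fin n // j ≠ y}) → Fin (w j)),
        if e.symm (b', γ) y = b then ∏ y', f y' (e.symm (b', γ) y') else 0)
      = ∑ b' : Fin (w y), if b' = b then
          ∑ γ : ((j : {j : Fin n // j ≠ y}) → Fin (w j)),
            f y b' * ∏ j : {j : Fin n // j ≠ y}, f j (γ j) else 0 := by
        refine Finset.sum_congr rfl fun b' _ => ?_
        simp only [hy]
        by_cases hb : b' = b <;> simp [hb, h1]
    _ = ∑ γ : ((j : {j : Fin n // j ≠ y}) → Fin (w j)),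
          f y b * ∏ j : {j : Fin n // j ≠ y}, f j (γ j) := by
        rw [Finset.sum_ite_eq' Finset.univ b]
        simp
    _ = f y b * ∏ j : {j : Fin n // j ≠ y}, ∑ b', f j b' := by
        rw [← Finset.mul_sum]
        congr 1
        rw [Finset.prod_univ_sum]
        rw [← Fintype.piFinset_univ]

theorem fine_lemma_joint_iff
    (m n : ℕ) (hm : 1 ≤ m) (hn : 1 ≤ n)
    (v : Fin m → ℕ) (w : Fin n → ℕ)
    (hv : ∀ x, 1 ≤ v x) (hw : ∀ y, 1 ≤ w y)
    (P : (x : Fin m) → (y : Fin n) → Fin (v x) → Fin (w y) → ℝ) :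
    (∃ Q : ((x : Fin m) → Fin (v x)) → ((y : Fin n) → Fin (w y)) → ℝ,
      (∀ α β, 0 ≤ Q α β) ∧
      (∑ α, ∑ β, Q α β) = 1 ∧
      (∀ (x : Fin m) (y : Fin n) (a : Fin (v x)) (b : Fin (w y)),
        P x y a b = ∑ α, ∑ β, (if α x = a ∧ β y = b then Q α β else 0)))
    ↔
    (∃ R : (y : Fin n) → ((x : Fin m) → Fin (v x)) → Fin (w y) → ℝ,
      (∀ y α b, 0 ≤ R y α b) ∧
      (∀ y, (∑ α, ∑ b, R y α b) = 1) ∧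
      (∀ (x : Fin m) (y : Fin n) (a : Fin (v x)) (b : Fin (w y)),
        P x y a b = ∑ α, (if α x = a then R y α b else 0)) ∧
      (∀ (y y' : Fin n) (α : (x : Fin m) → Fin (v x)),
        (∑ b, R y α b) = (∑ b, R y' α b))) := by
  classical
  constructor
  · rintro ⟨Q, hQ0, hQ1, hQm⟩
    refine ⟨fun y α b => ∑ β, if β y = b then Q α β else 0, ?_, ?_, ?_, ?_⟩
    · intro y α b
      exact Finset.sum_nonneg fun β _ => by split_ifs with h; exacts [hQ0 α β, le_refl 0]
    · intro y
      have : ∀ α, (∑ b, ∑ β, if β y = b then Q α β else 0) = ∑ β, Q α β := by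
        intro α
        rw [Finset.sum_comm]
        exact Finset.sum_congr rfl fun β _ => by simp [Finset.sum_ite_eq]
      simp only [this]
      exact hQ1
    · intro x y a b
      rw [hQm x y a b]
      refine Finset.sum_congr rfl fun α _ => ?_
      by_cases h : α x = a <;> simp [h, ite_and]
    · intro y y' α
      have : ∀ (y : Fin n), (∑ b, ∑ β, if β y = b then Q α β else 0) = ∑ β, Q α β := by
        intro y
        rw [Finset.sum_comm]
        exact Finset.sum_congr rfl fun β _ => by simp [Finset.sum_ite_eq]
      rw [this, this]
  · rintro ⟨R, hR0, hR1, hRm, hRc⟩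
    set y0 : Fin n := ⟨0, hn⟩ with hy0
    set M : ((x : Fin m) → Fin (v x)) → ℝ := fun α => ∑ b, R y0 α b with hMdef
    have hMy : ∀ (y : Fin n) α, (∑ b, R y α b) = M α := fun y α => hRc y y0 α
    have hM0 : ∀ α, 0 ≤ M α := fun α => Finset.sum_nonneg fun b _ => hR0 y0 α b
    have hRz : ∀ (y : Fin n) α (b : Fin (w y)), M α = 0 → R y α b = 0 := by
      intro y α b h
      exact (Finset.sum_eq_zero_iff_of_nonneg (fun b _ => hR0 y α b)).1
        ((hMy y α).trans h) b (Finset.mem_univ b)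
    set Q : ((x : Fin m) → Fin (v x)) → ((y : Fin n) → Fin (w y)) → ℝ :=
      fun α β => if M α = 0 then 0 else (∏ y', R y' α (β y')) / (M α) ^ (n - 1) with hQdef
    have hcard : Fintype.card {j : Fin n // j ≠ y0} = n - 1 := by
      simp [Fintype.card_subtype_compl, Fintype.card_subtype_eq]
    have hcard' : ∀ y : Fin n, Fintype.card {j : Fin n // j ≠ y} = n - 1 := by
      intro y
      simp [Fintype.card_subtype_compl, Fintype.card_subtype_eq]
    have key : ∀ (y : Fin n) α (b : Fin (w y)),
        (∑ β, if β y = b then Q α β else 0) = R y α b := by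
      intro y α b
      by_cases h : M α = 0
      · simp [hQdef, h, hRz y α b h]
      · have hq : ∀ β, Q α β = (∏ y', R y' α (β y')) / (M α) ^ (n - 1) := fun β => if_neg h
        have h2 : ∀ β : ((y' : Fin n) → Fin (w y')),
            (if β y = b then Q α β else 0)
              = (if β y = b then ∏ y', R y' α (β y') else 0) / (M α) ^ (n - 1) := by
          intro β
          rw [hq]
          split_ifs <;> simp
        simp only [h2]
        rw [← Finset.sum_div, sum_split w y b (fun y' => R y' α)]
        have hprod : (∏ j : {j : Fin n // j ≠ y}, ∑ b', R (j : Fin n) α b')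
            = (M α) ^ (n - 1) := by
          have : ∀ j : {j : Fin n // j ≠ y}, (∑ b', R (j : Fin n) α b') = M α :=
            fun j => hMy j α
          simp only [this]
          rw [Finset.prod_const, Finset.card_univ, hcard' y]
        rw [hprod, mul_div_assoc, div_self (pow_ne_zero _ h), mul_one]
    refine ⟨Q, ?_, ?_, ?_⟩
    · intro α β
      simp only [hQdef]
      split_ifs with h
      · exact le_refl 0
      · exact div_nonneg (Finset.prod_nonneg fun y' _ => hR0 y' α (β y'))
          (pow_nonneg (hM0 α) _)
    · have hsum : ∀ α, (∑ β, Q α β) = M α := by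
        intro α
        calc (∑ β, Q α β) = ∑ β, ∑ b, if β y0 = b then Q α β else 0 := by
              exact Finset.sum_congr rfl fun β _ => by simp [Finset.sum_ite_eq]
          _ = ∑ b, ∑ β, if β y0 = b then Q α β else 0 := Finset.sum_comm
          _ = ∑ b, R y0 α b := Finset.sum_congr rfl fun b _ => key y0 α b
          _ = M α := rfl
      simp only [hsum]
      exact hR1 y0
    · intro x y a b
      rw [hRm x y a b]
      refine Finset.sum_congr rfl fun α _ => ?_
      by_cases h : α x = a
      · simp only [h, if_true, ite_and, eq_self_iff_true]
        exact (key y α b).symm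
      · simp [h, ite_and]
end

section
/- Let m, n ≥ 1 and suppose R_y(a_1…a_m, b), y = 1,…,n, are nonnegative functions each summing to 1 (with a_x ∈ {1,…,v_x}, b ∈ {1,…,w_y}) whose marginals M(a_1…a_m) := Σ_b R_y(a_1…a_m, b) are independent of y. Define Q(a_1…a_m b_1…b_n) := (Π_{y=1}^{n} R_y(a_1…a_m, b_y)) / M(a_1…a_m)^{n−1} whenever M(a_1…a_m) ≠ 0, and Q := 0 whenever M(a_1…a_m) = 0. Then Q is nonnegative, Σ over all tuples of Q equals 1, and for all a,b,x,y: Σ over all tuples with a_x = a and b_y = b of Q(a_1…a_m b_1…b_n) equals Σ_{a_1,…,a_m with a_x = a} R_y(a_1…a_m, b). -/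
/-!
Bell scenario [(v_1…v_m),(w_1…w_n)]: party A has `m` measurements, measurement `x` having
`v x` outcomes, party B has `n` measurements, measurement `y` having `w y` outcomes.

STATEMENT 1 (Fine's construction): given nonnegative normalized `R y (α, b)` whose
marginals `M α = ∑ b, R y α b` are independent of `y`, the function
`Q α β = (∏ y, R y α (β y)) / (M α)^(n-1)` (set to `0` when `M α = 0`) is nonnegative,
sums to one, and reproduces the same bipartite marginals as the `R y`.
-/

theorem fine_construction
    (m n : ℕ) (hm : 1 ≤ m) (hn : 1 ≤ n)
    (v : Fin m → ℕ) (w : Fin n → ℕ)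
    (R : (y : Fin n) → ((x : Fin m) → Fin (v x)) → Fin (w y) → ℝ)
    (hR0 : ∀ y α b, 0 ≤ R y α b)
    (hR1 : ∀ y, (∑ α, ∑ b, R y α b) = 1)
    (M : ((x : Fin m) → Fin (v x)) → ℝ)
    (hM : ∀ y α, (∑ b, R y α b) = M α)
    (Q : ((x : Fin m) → Fin (v x)) → ((y : Fin n) → Fin (w y)) → ℝ)
    (hQ : ∀ α β, Q α β =
      if M α = 0 then 0 else (∏ y, R y α (β y)) / (M α) ^ (n - 1)) :
    (∀ α β, 0 ≤ Q α β) ∧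
    (∑ α, ∑ β, Q α β) = 1 ∧
    (∀ (x : Fin m) (y : Fin n) (a : Fin (v x)) (b : Fin (w y)),
      (∑ α, ∑ β, (if α x = a ∧ β y = b then Q α β else 0))
        = ∑ α, (if α x = a then R y α b else 0)) := by
  have y0 : Fin n := ⟨0, hn⟩
  have hM0 : ∀ α, 0 ≤ M α := fun α =>
    (hM y0 α) ▸ Finset.sum_nonneg fun b _ => hR0 y0 α b
  have hRz : ∀ α, M α = 0 → ∀ y b, R y α b = 0 := by
    intro α h y b
    have := (Finset.sum_eq_zero_iff_of_nonneg (fun b _ => hR0 y α b)).mp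
      ((hM y α).trans h)
    exact this b (Finset.mem_univ b)
  -- total sum over β of the product
  have hsum : ∀ α, (∑ β : (y : Fin n) → Fin (w y), ∏ y, R y α (β y)) = M α ^ n := by
    intro α
    calc ∑ β : (y : Fin n) → Fin (w y), ∏ y, R y α (β y)
        = ∑ β ∈ Fintype.piFinset (fun _ : Fin n => Finset.univ),
            ∏ y, R y α (β y) := by rw [Fintype.piFinset_univ]
      _ = ∏ y, ∑ b, R y α b := (Finset.prod_univ_sum _ _).symm
      _ = M α ^ n := by
          simp only [hM]
          rw [Finset.prod_const, Finset.card_univ, Fintype.card_fin]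
  -- conditional sum over β of the product
  have hcond : ∀ α (y : Fin n) (b : Fin (w y)),
      (∑ β : (y : Fin n) → Fin (w y), if β y = b then ∏ y', R y' α (β y') else 0)
        = R y α b * M α ^ (n - 1) := by
    intro α y b
    set f : (y' : Fin n) → Fin (w y') → ℝ := fun y' b' =>
      if h : y' = y then (if (h ▸ b' : Fin (w y)) = b then R y' α b' else 0)
      else R y' α b' with hf
    have hstep : ∀ β : (y : Fin n) → Fin (w y),
        (if β y = b then ∏ y', R y' α (β y') else 0) = ∏ y', f y' (β y') := by
      intro β
      by_cases hb : β y = b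
      · rw [if_pos hb]
        refine Finset.prod_congr rfl fun y' _ => ?_
        by_cases h : y' = y
        · subst h; simp [hf, hb]
        · simp [hf, h]
      · rw [if_neg hb]
        symm
        apply Finset.prod_eq_zero (Finset.mem_univ y)
        simp [hf, hb]
    calc (∑ β : (y : Fin n) → Fin (w y), if β y = b then ∏ y', R y' α (β y') else 0)
        = ∑ β, ∏ y', f y' (β y') := Finset.sum_congr rfl fun β _ => hstep β
      _ = ∑ β ∈ Fintype.piFinset (fun _ : Fin n => Finset.univ),
            ∏ y', f y' (β y') := by rw [Fintype.piFinset_univ]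
      _ = ∏ y', ∑ b', f y' b' := (Finset.prod_univ_sum _ _).symm
      _ = (∑ b', f y b') * ∏ y' ∈ Finset.univ.erase y, ∑ b', f y' b' :=
          (Finset.mul_prod_erase _ _ (Finset.mem_univ y)).symm
      _ = R y α b * M α ^ (n - 1) := by
          congr 1
          · simp [hf]
          · rw [Finset.prod_congr rfl (fun y' hy' => ?_), Finset.prod_const,
              Finset.card_erase_of_mem (Finset.mem_univ y), Finset.card_univ,
              Fintype.card_fin]
            have h : y' ≠ y := Finset.ne_of_mem_erase hy'
            simp [hf, h, hM]
  have hQsum : ∀ α, (∑ β, Q α β) = M α := by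
    intro α
    by_cases h : M α = 0
    · simp [hQ, h]
    · simp only [hQ, if_neg h, ← Finset.sum_div, hsum]
      rw [div_eq_iff (pow_ne_zero _ h), mul_comm, ← pow_succ,
        Nat.sub_add_cancel hn]
  refine ⟨?_, ?_, ?_⟩
  · intro α β
    rw [hQ]
    by_cases h : M α = 0
    · simp [h]
    · rw [if_neg h]
      exact div_nonneg (Finset.prod_nonneg fun y _ => hR0 y α (β y))
        (pow_nonneg (hM0 α) _)
  · calc (∑ α, ∑ β, Q α β) = ∑ α, M α := Finset.sum_congr rfl fun α _ => hQsum α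
      _ = ∑ α, ∑ b, R y0 α b := Finset.sum_congr rfl fun α _ => (hM y0 α).symm
      _ = 1 := hR1 y0
  · intro x y a b
    refine Finset.sum_congr rfl fun α _ => ?_
    simp only [ite_and]
    by_cases ha : α x = a
    · simp only [if_pos ha]
      by_cases h : M α = 0
      · simp [hQ, h, hRz α h]
      · calc (∑ β, if β y = b then Q α β else 0)
            = (∑ β : (y : Fin n) → Fin (w y), if β y = b then ∏ y', R y' α (β y') else 0) / M α ^ (n - 1) := by
              rw [Finset.sum_div]
              refine Finset.sum_congr rfl fun β _ => ?_
              rw [hQ, if_neg h]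
              split <;> simp
          _ = R y α b := by
              rw [hcond, mul_div_assoc, div_self (pow_ne_zero _ h), mul_one]
    · simp [if_neg ha]
end

section
/- Let P(ab|xy) be a behavior in a bipartite Bell scenario [(v_1…v_m),(w_1…w_n)]. Then P is local if and only if there exist n nonnegative functions R_y(a_1…a_m, b) (one for each y ∈ {1,…,n}, with a_x ∈ {1,…,v_x} and b ∈ {1,…,w_y}), each summing to 1, such that (i) P(ab|xy) = Σ_{a_1,…,a_m with a_x = a} R_y(a_1…a_m, b) for all a,b,x,y, and (ii) the marginal Σ_b R_y(a_1…a_m, b) is the same function of (a_1,…,a_m) for every y. -/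
open Finset in
lemma key_sum {n : ℕ} {w : Fin n → ℕ} (y : Fin n) (f : (y' : Fin n) → Fin (w y') → ℝ)
    (b : Fin (w y)) :
    ∑ β : (y' : Fin n) → Fin (w y'), (if β y = b then ∏ y', f y' (β y') else 0)
    = f y b * ∏ y' ∈ Finset.univ.erase y, ∑ c, f y' c := by
  classical
  set t : ∀ y', Finset (Fin (w y')) :=
    fun y' => Finset.univ.filter (fun c => ∀ h : y' = y, h ▸ c = b) with ht
  have hpi : Fintype.piFinset t = Finset.univ.filter (fun β => β y = b) := by
    ext β
    simp only [Fintype.mem_piFinset, ht, mem_filter, mem_univ, true_and]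
    constructor
    · intro h; exact h y rfl
    · rintro h y' rfl; exact h
  have h1 : ∑ β : (y' : Fin n) → Fin (w y'), (if β y = b then ∏ y', f y' (β y') else 0)
      = ∑ β ∈ Fintype.piFinset t, ∏ y', f y' (β y') := by
    rw [hpi, Finset.sum_filter]
  rw [h1, ← Finset.prod_univ_sum]
  have hy : ∑ c ∈ t y, f y c = f y b := by
    have : t y = {b} := by ext c; simp [ht]
    rw [this, Finset.sum_singleton]
  rw [← Finset.mul_prod_erase _ _ (Finset.mem_univ y), hy]
  congr 1
  apply Finset.prod_congr rfl
  intro y' hy'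
  have : t y' = Finset.univ := by
    ext c; simp only [ht, mem_filter, mem_univ, true_and, iff_true]
    intro h; exact absurd h (Finset.ne_of_mem_erase hy')
  rw [this]

/-!
Bell scenario [(v_1…v_m),(w_1…w_n)].  A behavior
`P : (x : Fin m) → (y : Fin n) → Fin (v x) → Fin (w y) → ℝ` is *local* if it is a convex
combination of deterministic behaviors `P(ab|xy) = δ_{a,α_x} δ_{b,β_y}`.

STATEMENT 2 (Lemma 3 of the paper): `P` is local iff there exist `n` nonnegative
normalized functions `R y (a_1…a_m, b)` returning `P` as marginals and sharing a common
marginal distribution on Alice's tuples.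
-/

/-- `P` is a convex combination of deterministic behaviors. -/
def IsLocal {m n : ℕ} {v : Fin m → ℕ} {w : Fin n → ℕ}
    (P : (x : Fin m) → (y : Fin n) → Fin (v x) → Fin (w y) → ℝ) : Prop :=
  ∃ q : ((x : Fin m) → Fin (v x)) → ((y : Fin n) → Fin (w y)) → ℝ,
    (∀ α β, 0 ≤ q α β) ∧
    (∑ α, ∑ β, q α β) = 1 ∧
    (∀ (x : Fin m) (y : Fin n) (a : Fin (v x)) (b : Fin (w y)),
      P x y a b = ∑ α, ∑ β,
        q α β * (if α x = a then 1 else 0) * (if β y = b then 1 else 0))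

theorem local_iff_fine
    (m n : ℕ) (hm : 1 ≤ m) (hn : 1 ≤ n)
    (v : Fin m → ℕ) (w : Fin n → ℕ)
    (hv : ∀ x, 1 ≤ v x) (hw : ∀ y, 1 ≤ w y)
    (P : (x : Fin m) → (y : Fin n) → Fin (v x) → Fin (w y) → ℝ) :
    IsLocal P
    ↔
    (∃ R : (y : Fin n) → ((x : Fin m) → Fin (v x)) → Fin (w y) → ℝ,
      (∀ y α b, 0 ≤ R y α b) ∧
      (∀ y, (∑ α, ∑ b, R y α b) = 1) ∧
      (∀ (x : Fin m) (y : Fin n) (a : Fin (v x)) (b : Fin (w y)),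
        P x y a b = ∑ α, (if α x = a then R y α b else 0)) ∧
      (∀ (y y' : Fin n) (α : (x : Fin m) → Fin (v x)),
        (∑ b, R y α b) = (∑ b, R y' α b))) := by
  classical
  constructor
  · rintro ⟨q, hq0, hq1, hqP⟩
    refine ⟨fun y α b => ∑ β, if β y = b then q α β else 0, ?_, ?_, ?_, ?_⟩
    · intro y α b
      exact Finset.sum_nonneg fun β _ => by split <;> [exact hq0 α β; rfl]
    · intro y
      have : ∀ α, ∑ b, ∑ β, (if β y = b then q α β else 0) = ∑ β, q α β := by
        intro α
        rw [Finset.sum_comm]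
        exact Finset.sum_congr rfl fun β _ => by simp
      simpa only [this] using hq1
    · intro x y a b
      rw [hqP x y a b]
      refine Finset.sum_congr rfl fun α _ => ?_
      by_cases h : α x = a
      · simp only [h, if_true, mul_one]
        exact Finset.sum_congr rfl fun β _ => by split <;> simp
      · simp [h]
    · intro y y' α
      have h : ∀ y : Fin n, ∑ b, ∑ β, (if β y = b then q α β else 0) = ∑ β, q α β := by
        intro y
        rw [Finset.sum_comm]
        exact Finset.sum_congr rfl fun β _ => by simp
      rw [h, h]
  · rintro ⟨R, hR0, hR1, hRP, hRc⟩
    set y0 : Fin n := ⟨0, hn⟩ with hy0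
    set M : ((x : Fin m) → Fin (v x)) → ℝ := fun α => ∑ b, R y0 α b with hM
    have hMy : ∀ y α, ∑ b, R y α b = M α := fun y α => hRc y y0 α
    have hM0 : ∀ α, 0 ≤ M α := fun α => Finset.sum_nonneg fun b _ => hR0 _ _ _
    have hMz : ∀ α, M α = 0 → ∀ (y : Fin n) (b : Fin (w y)), R y α b = 0 := by
      intro α hα y b
      have := (Finset.sum_eq_zero_iff_of_nonneg
        (fun b _ => hR0 y α b)).1 ((hMy y α).trans hα)
      exact this b (Finset.mem_univ b)
    set q : ((x : Fin m) → Fin (v x)) → ((y : Fin n) → Fin (w y)) → ℝ :=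
      fun α β => if M α = 0 then 0 else (∏ y, R y α (β y)) / (M α) ^ (n - 1) with hq
    have hqnn : ∀ α β, 0 ≤ q α β := by
      intro α β
      simp only [hq]
      split
      · rfl
      · exact div_nonneg (Finset.prod_nonneg fun y _ => hR0 _ _ _)
          (pow_nonneg (hM0 α) _)
    -- sum over β of q α β * indicator
    have hkey : ∀ (α) (y : Fin n) (b : Fin (w y)),
        ∑ β, (if β y = b then q α β else 0) = R y α b := by
      intro α y b
      by_cases hα : M α = 0
      · simp [hq, hα, hMz α hα y b]
      · have hsplit : ∑ β, (if β y = b then q α β else 0)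
            = (∑ β : (y' : Fin n) → Fin (w y'),
               (if β y = b then ∏ y', R y' α (β y') else 0)) / (M α) ^ (n - 1) := by
          rw [Finset.sum_div]
          exact Finset.sum_congr rfl fun β _ => by
            simp only [hq, hα, if_false]
            split <;> simp
        rw [hsplit, key_sum y (fun y' => R y' α) b]
        have hprod : ∏ y' ∈ Finset.univ.erase y, ∑ c, R y' α c = (M α) ^ (n - 1) := by
          rw [Finset.prod_congr rfl fun y' _ => hMy y' α, Finset.prod_const,
            Finset.card_erase_of_mem (Finset.mem_univ y), Finset.card_univ,
            Fintype.card_fin]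
        rw [hprod, mul_div_assoc, div_self (pow_ne_zero _ hα), mul_one]
    have hsumβ : ∀ α, ∑ β, q α β = M α := by
      intro α
      by_cases hα : M α = 0
      · simp [hq, hα]
      · have : ∑ β, q α β = (∑ β : (y' : Fin n) → Fin (w y'),
            ∏ y', R y' α (β y')) / (M α) ^ (n - 1) := by
          rw [Finset.sum_div]
          exact Finset.sum_congr rfl fun β _ => by simp [hq, hα]
        rw [this, ← Fintype.prod_sum (fun y b => R y α b)]
        have : ∏ y : Fin n, ∑ b, R y α b = (M α) ^ n := by
          rw [Finset.prod_congr rfl fun y' _ => hMy y' α, Finset.prod_const,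
            Finset.card_univ, Fintype.card_fin]
        rw [this]
        calc M α ^ n / M α ^ (n - 1)
            = M α ^ (n - (n - 1)) := (pow_sub₀ _ hα (Nat.sub_le n 1)).symm
          _ = M α ^ 1 := by rw [Nat.sub_sub_self hn]
          _ = M α := pow_one _
    refine ⟨q, hqnn, ?_, ?_⟩
    · have : ∑ α, ∑ β, q α β = ∑ α, M α := Finset.sum_congr rfl fun α _ => hsumβ α
      rw [this]
      have := hR1 y0
      rw [Finset.sum_congr rfl fun α _ => (hMy y0 α)] at this
      exact this
    · intro x y a b
      rw [hRP x y a b]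
      refine Finset.sum_congr rfl fun α _ => ?_
      by_cases h : α x = a
      · simp only [h, if_true, mul_one]
        rw [← hkey α y b]
        exact Finset.sum_congr rfl fun β _ => by split <;> simp
      · simp [h]
end

section
/- Fix n ≥ 2 and w_1,…,w_n ≥ 2. A normalized, no-signalling behavior P in the scenario [(2 2),(w_1…w_n)] is local if and only if P is nonnegative and satisfies all lifted CHSH inequalities. -/
/-!
Bell scenario [(2 2),(w_1…w_n)]: party A has two measurements `x : Fin 2`, each with
outcomes `a : Fin 2` (the paper's labels "1","2" are the indices `0`,`1`), and party B
has `n` measurements `y : Fin n`, measurement `y` having outcomes `b : Fin (w y)`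
(the paper's label `j ∈ {1,…,w_y}` is the index `j-1`).  A behavior is
`P : Fin 2 → (y : Fin n) → Fin 2 → Fin (w y) → ℝ`, with `P x y a b = P(ab|xy)`.
-/

/-- The behavior `P` is nonnegative. -/
def Nonneg22 {n : ℕ} {w : Fin n → ℕ}
    (P : Fin 2 → (y : Fin n) → Fin 2 → Fin (w y) → ℝ) : Prop :=
  ∀ x y a b, 0 ≤ P x y a b

/-- The behavior `P` is normalized. -/
def Normalized22 {n : ℕ} {w : Fin n → ℕ}
    (P : Fin 2 → (y : Fin n) → Fin 2 → Fin (w y) → ℝ) : Prop :=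
  ∀ x y, (∑ a, ∑ b, P x y a b) = 1

/-- The behavior `P` is no-signalling: A's marginals do not depend on `y` and B's
marginals do not depend on `x`. -/
def NoSignalling22 {n : ℕ} {w : Fin n → ℕ}
    (P : Fin 2 → (y : Fin n) → Fin 2 → Fin (w y) → ℝ) : Prop :=
  (∀ (x : Fin 2) (a : Fin 2) (y y' : Fin n), (∑ b, P x y a b) = (∑ b, P x y' a b)) ∧
  (∀ (y : Fin n) (b : Fin (w y)) (x x' : Fin 2), (∑ a, P x y a b) = (∑ a, P x' y a b))

/-- `P` is a convex combination of deterministic behaviors, i.e. it is local. -/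
def IsLocal22 {n : ℕ} {w : Fin n → ℕ}
    (P : Fin 2 → (y : Fin n) → Fin 2 → Fin (w y) → ℝ) : Prop :=
  ∃ q : (Fin 2 → Fin 2) → ((y : Fin n) → Fin (w y)) → ℝ,
    (∀ α β, 0 ≤ q α β) ∧
    (∑ α, ∑ β, q α β) = 1 ∧
    (∀ (x : Fin 2) (y : Fin n) (a : Fin 2) (b : Fin (w y)),
      P x y a b = ∑ α, ∑ β,
        q α β * (if α x = a then 1 else 0) * (if β y = b then 1 else 0))

/-- `P_A(a|x)`, A's marginal probability of outcome `a` for measurement `x`,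
computed using B's measurement `y` (independent of `y` for no-signalling behaviors). -/
noncomputable def PAm {n : ℕ} {w : Fin n → ℕ}
    (P : Fin 2 → (y : Fin n) → Fin 2 → Fin (w y) → ℝ) (a x : Fin 2) (y : Fin n) : ℝ :=
  ∑ b, P x y a b

/-- `P_B(G|y) = Σ_{b∈G} P_B(b|y)`, computed using A's measurement `x = 0`
(independent of `x` for no-signalling behaviors). -/
noncomputable def PBm {n : ℕ} {w : Fin n → ℕ}
    (P : Fin 2 → (y : Fin n) → Fin 2 → Fin (w y) → ℝ) (y : Fin n)
    (G : Finset (Fin (w y))) : ℝ :=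
  ∑ b ∈ G, ∑ a, P 0 y a b

/-- `P(aG|xy) = Σ_{b∈G} P(ab|xy)`. -/
noncomputable def PaG {n : ℕ} {w : Fin n → ℕ}
    (P : Fin 2 → (y : Fin n) → Fin 2 → Fin (w y) → ℝ) (a x : Fin 2) (y : Fin n)
    (G : Finset (Fin (w y))) : ℝ :=
  ∑ b ∈ G, P x y a b

/-- `P` satisfies all lifted CHSH inequalities: for every ordered pair of distinct
measurements `y ≠ y'` of B and all nonempty `G ⊆ {1,…,w_y−1}`, `G' ⊆ {1,…,w_{y'}−1}`
(i.e. avoiding the last outcome),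
`0 ≤ P_A(1|1) + P_B(G|y) − P(1G|1y) − P(1G|2y) − P(1G′|1y′) + P(1G′|2y′) ≤ 1` and
`0 ≤ P_A(1|2) + P_B(G|y) − P(1G|1y) − P(1G|2y) + P(1G′|1y′) − P(1G′|2y′) ≤ 1`. -/
def LiftedCHSH {n : ℕ} {w : Fin n → ℕ}
    (P : Fin 2 → (y : Fin n) → Fin 2 → Fin (w y) → ℝ) : Prop :=
  ∀ (y y' : Fin n), y ≠ y' →
  ∀ (G : Finset (Fin (w y))) (G' : Finset (Fin (w y'))),
    G.Nonempty → G'.Nonempty →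
    (∀ j ∈ G, (j : ℕ) + 1 < w y) → (∀ j ∈ G', (j : ℕ) + 1 < w y') →
    (0 ≤ PAm P 0 0 y + PBm P y G - PaG P 0 0 y G - PaG P 0 1 y G
          - PaG P 0 0 y' G' + PaG P 0 1 y' G' ∧
     PAm P 0 0 y + PBm P y G - PaG P 0 0 y G - PaG P 0 1 y G
          - PaG P 0 0 y' G' + PaG P 0 1 y' G' ≤ 1) ∧
    (0 ≤ PAm P 0 1 y + PBm P y G - PaG P 0 0 y G - PaG P 0 1 y G
          + PaG P 0 0 y' G' - PaG P 0 1 y' G' ∧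
     PAm P 0 1 y + PBm P y G - PaG P 0 0 y G - PaG P 0 1 y G
          + PaG P 0 0 y' G' - PaG P 0 1 y' G' ≤ 1)

/-!
A behavior is local iff there is a joint distribution of `(A₀, A₁, B₁, …, B_n)` with the
observed pair marginals. It suffices to give a distribution `q` of `(A₀, A₁)` and, for every
`y`, a joint distribution of `(A₀, A₁, B_y)` with the right pair marginals and `(A₀, A₁)`-marginal
`q`: making the `B_y` conditionally independent given `(A₀, A₁)` glues them together.
As A's outcomes are binary, `q` is determined by `t = P(A₀ = 0, A₁ = 0)`, and a joint
distribution of `(A₀, A₁, B_y)` with this `t` exists iff `L_y ≤ t ≤ U_y`, where `L_y, U_y` are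
the summed Fréchet bounds on `P(A₀ = 0, A₁ = 0, B_y = b)`. A common `t` exists iff
`L_y ≤ U_{y'}` for all `y, y'`; for `y ≠ y'` this is the lower bound of the lifted CHSH
inequality (A) for suitable `G, G'`. That bound holds for all `G, G'` because complementing
`G` or `G'` exchanges the inequalities (A) and (B) (and, for `G`, their two sides), while the
cases `G = ∅` or `G' = ∅` follow from nonnegativity. Conversely, the CHSH expressions take
values in `[0, 1]` on deterministic behaviors.
-/

open Finset

theorem Fintype.sum_prod_mul_ite_eq {ι R : Type*} [Fintype ι] [DecidableEq ι] [CommSemiring R]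
    {κ : ι → Type*} [∀ i, Fintype (κ i)] [∀ i, DecidableEq (κ i)] (c : ∀ i, κ i → R)
    (hc : ∀ i, ∑ k, c i k = 1) (i : ι) (k : κ i) :
    ∑ f : ∀ i, κ i, (∏ j, c j (f j)) * (if f i = k then 1 else 0) = c i k := by
  set g := Function.update c i fun k' => if k' = k then c i k else 0
  have hg_ne : ∀ j ∈ univ.erase i, g j = c j := fun j hj =>
    Function.update_of_ne (ne_of_mem_erase hj) _ _
  have hg : ∀ f : ∀ i, κ i, ∏ j, g j (f j) = (∏ j, c j (f j)) * (if f i = k then 1 else 0) := by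
    intro f
    rw [← Finset.mul_prod_erase _ _ (mem_univ i), ← Finset.mul_prod_erase _ _ (mem_univ i),
      Finset.prod_congr rfl fun j hj => congrFun (hg_ne j hj) (f j)]
    split_ifs with h <;> simp [g, h]
  simp_rw [← hg, ← Fintype.prod_sum, ← Finset.mul_prod_erase _ _ (mem_univ i)]
  rw [Finset.prod_eq_one fun j hj => by rw [hg_ne j hj, hc]]
  simp [g]

theorem Fintype.exists_sum_eq_of_mem_Icc {ι 𝕜 : Type*} [Fintype ι] [Field 𝕜] [LinearOrder 𝕜]
    [IsStrictOrderedRing 𝕜] {f g : ι → 𝕜} (hfg : f ≤ g) {t : 𝕜}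
    (ht : t ∈ Set.Icc (∑ i, f i) (∑ i, g i)) : ∃ h : ι → 𝕜, f ≤ h ∧ h ≤ g ∧ ∑ i, h i = t := by
  set θ := (t - ∑ i, f i) / (∑ i, g i - ∑ i, f i)
  have hθ : θ ∈ Set.Icc 0 1 := ⟨div_nonneg (by linarith [ht.1]) (by linarith [ht.1, ht.2]),
    div_le_one_of_le₀ (by linarith [ht.2]) (by linarith [ht.1, ht.2])⟩
  refine ⟨fun i => f i + θ * (g i - f i), fun i => ?_, fun i => ?_, ?_⟩
  · nlinarith [hfg i, hθ.1]
  · nlinarith [hfg i, hθ.2]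
  · rw [sum_add_distrib, ← mul_sum, sum_sub_distrib]
    rcases eq_or_ne (∑ i, g i) (∑ i, f i) with h | h
    · rw [h]; linarith [ht.1, ht.2]
    · simp only [θ]; field_simp [sub_ne_zero.mpr h]; ring

theorem Finset.sum_max_zero_eq_sum_filter {ι M : Type*} [AddCommMonoid M] [LinearOrder M]
    (s : Finset ι) (f : ι → M) :
    ∑ i ∈ s, max 0 (f i) = ∑ i ∈ s with 0 < f i, f i := by
  rw [sum_filter]
  refine sum_congr rfl fun i _ => ?_
  split_ifs with h
  · exact max_eq_right h.le
  · exact max_eq_left (not_lt.mp h)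

theorem sum_fin_two_arrow {M : Type*} [AddCommMonoid M] (f : Fin 2 → Fin 2 → M) :
    ∑ α : Fin 2 → Fin 2, f (α 0) (α 1) = ∑ a₀, ∑ a₁, f a₀ a₁ :=
  (Fintype.sum_equiv (finTwoArrowEquiv (Fin 2)) _ (fun p => f p.1 p.2) fun _ => rfl).trans
    (Fintype.sum_prod_type _)

/-- The `2 × 2` table with top-left entry `s`, row sums `r₀, r₁` and first column sum `c₀`. -/
def fineTable (r₀ r₁ c₀ s : ℝ) : Fin 2 → Fin 2 → ℝ :=
  ![![s, r₀ - s], ![c₀ - s, r₁ - c₀ + s]]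

theorem fineTable_nonneg {r₀ r₁ c₀ s : ℝ} (h₀ : 0 ≤ s) (hr : s ≤ r₀) (hc : s ≤ c₀)
    (h₁ : c₀ - r₁ ≤ s) (a₀ a₁ : Fin 2) : 0 ≤ fineTable r₀ r₁ c₀ s a₀ a₁ := by
  fin_cases a₀ <;> fin_cases a₁ <;> simp [fineTable] <;> linarith

theorem sum_fineTable_apply {ι : Type*} (s : Finset ι) (r₀ r₁ c₀ t : ι → ℝ) (a₀ a₁ : Fin 2) :
    ∑ i ∈ s, fineTable (r₀ i) (r₁ i) (c₀ i) (t i) a₀ a₁ =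
      fineTable (∑ i ∈ s, r₀ i) (∑ i ∈ s, r₁ i) (∑ i ∈ s, c₀ i) (∑ i ∈ s, t i) a₀ a₁ := by
  fin_cases a₀ <;> fin_cases a₁ <;>
    simp [fineTable, sum_add_distrib, sum_sub_distrib]

theorem sum_ite_mul_fineTable (r₀ r₁ c₀ s : ℝ) (x a : Fin 2) :
    ∑ α : Fin 2 → Fin 2, (if α x = a then 1 else 0) * fineTable r₀ r₁ c₀ s (α 0) (α 1) =
      ![![r₀, r₁], ![c₀, r₀ + r₁ - c₀]] x a := by
  obtain rfl | rfl : x = 0 ∨ x = 1 := by omega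
  · rw [sum_fin_two_arrow fun a₀ a₁ => (if a₀ = a then 1 else 0) * fineTable r₀ r₁ c₀ s a₀ a₁]
    fin_cases a <;> simp [fineTable, Fin.sum_univ_two]
  · rw [sum_fin_two_arrow fun a₀ a₁ => (if a₁ = a then 1 else 0) * fineTable r₀ r₁ c₀ s a₀ a₁]
    fin_cases a <;> simp [fineTable, Fin.sum_univ_two]
    ring

theorem sum_fineTable_eq_add (r₀ r₁ c₀ s : ℝ) :
    ∑ α : Fin 2 → Fin 2, fineTable r₀ r₁ c₀ s (α 0) (α 1) = r₀ + r₁ := by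
  rw [sum_fin_two_arrow]
  simp [fineTable, Fin.sum_univ_two]

section Behavior

variable {n : ℕ} {w : Fin n → ℕ} (P : Fin 2 → (y : Fin n) → Fin 2 → Fin (w y) → ℝ)

theorem PAm_eq_PaG_univ (a x : Fin 2) (y : Fin n) : PAm P a x y = PaG P a x y univ := rfl

theorem PaG_empty (a x : Fin 2) (y : Fin n) : PaG P a x y ∅ = 0 := sum_empty

theorem PaG_add_PaG_compl (a x : Fin 2) (y : Fin n) (G : Finset (Fin (w y))) :
    PaG P a x y G + PaG P a x y Gᶜ = PAm P a x y :=
  sum_add_sum_compl G _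

theorem PaG_nonneg (hpos : Nonneg22 P) (a x : Fin 2) (y : Fin n) (G : Finset (Fin (w y))) :
    0 ≤ PaG P a x y G :=
  sum_nonneg fun b _ => hpos x y a b

theorem PBm_add_PBm_compl (hnorm : Normalized22 P) (y : Fin n) (G : Finset (Fin (w y))) :
    PBm P y G + PBm P y Gᶜ = 1 := by
  rw [PBm, PBm, sum_add_sum_compl, sum_comm]
  exact hnorm 0 y

variable {P}

theorem PAm_eq_of_noSignalling (hns : NoSignalling22 P) (a x : Fin 2) (y y' : Fin n) :
    PAm P a x y = PAm P a x y' :=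
  hns.1 x a y y'

theorem PBm_eq_PaG_add_PaG (hns : NoSignalling22 P) (x : Fin 2) (y : Fin n)
    (G : Finset (Fin (w y))) : PBm P y G = PaG P 0 x y G + PaG P 1 x y G := by
  simp only [PBm, PaG, ← sum_add_distrib, hns.2 y _ 0 x, Fin.sum_univ_two]

theorem PaG_le_PBm (hpos : Nonneg22 P) (hns : NoSignalling22 P) (a x : Fin 2) (y : Fin n)
    (G : Finset (Fin (w y))) : PaG P a x y G ≤ PBm P y G := by
  rw [PBm_eq_PaG_add_PaG hns x]
  obtain rfl | rfl : a = 0 ∨ a = 1 := by omega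
  · linarith [PaG_nonneg P hpos 1 x y G]
  · linarith [PaG_nonneg P hpos 0 x y G]

theorem PaG_add_PaG_compl_mem_Icc (hpos : Nonneg22 P) (hnorm : Normalized22 P)
    (hns : NoSignalling22 P) (a a' x x' : Fin 2) (y : Fin n) (G : Finset (Fin (w y))) :
    PaG P a x y G + PaG P a' x' y Gᶜ ∈ Set.Icc 0 1 :=
  ⟨add_nonneg (PaG_nonneg P hpos a x y G) (PaG_nonneg P hpos a' x' y Gᶜ), by
    linarith [PaG_le_PBm hpos hns a x y G, PaG_le_PBm hpos hns a' x' y Gᶜ,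
      PBm_add_PBm_compl P hnorm y G]⟩

variable (P)

noncomputable def chshA (y y' : Fin n) (G : Finset (Fin (w y))) (G' : Finset (Fin (w y'))) : ℝ :=
  PAm P 0 0 y + PBm P y G - PaG P 0 0 y G - PaG P 0 1 y G
    - PaG P 0 0 y' G' + PaG P 0 1 y' G'

noncomputable def chshB (y y' : Fin n) (G : Finset (Fin (w y))) (G' : Finset (Fin (w y'))) : ℝ :=
  PAm P 0 1 y + PBm P y G - PaG P 0 0 y G - PaG P 0 1 y G
    + PaG P 0 0 y' G' - PaG P 0 1 y' G'

def CHSHHolds (y y' : Fin n) (G : Finset (Fin (w y))) (G' : Finset (Fin (w y'))) : Prop :=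
  chshA P y y' G G' ∈ Set.Icc 0 1 ∧ chshB P y y' G G' ∈ Set.Icc 0 1

theorem liftedCHSH_iff : LiftedCHSH P ↔ ∀ y y' : Fin n, y ≠ y' →
    ∀ (G : Finset (Fin (w y))) (G' : Finset (Fin (w y'))), G.Nonempty → G'.Nonempty →
      (∀ j ∈ G, (j : ℕ) + 1 < w y) → (∀ j ∈ G', (j : ℕ) + 1 < w y') →
      CHSHHolds P y y' G G' :=
  Iff.rfl

variable {P} {y y' : Fin n}

theorem chshA_compl_right (hns : NoSignalling22 P) (G : Finset (Fin (w y)))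
    (G' : Finset (Fin (w y'))) : chshA P y y' G G'ᶜ = chshB P y y' G G' := by
  rw [chshA, chshB, PAm_eq_of_noSignalling hns 0 0 y y', PAm_eq_of_noSignalling hns 0 1 y y']
  linarith [PaG_add_PaG_compl P 0 0 y' G', PaG_add_PaG_compl P 0 1 y' G']

theorem chshB_compl_right (hns : NoSignalling22 P) (G : Finset (Fin (w y)))
    (G' : Finset (Fin (w y'))) : chshB P y y' G G'ᶜ = chshA P y y' G G' := by
  rw [chshA, chshB, PAm_eq_of_noSignalling hns 0 0 y y', PAm_eq_of_noSignalling hns 0 1 y y']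
  linarith [PaG_add_PaG_compl P 0 0 y' G', PaG_add_PaG_compl P 0 1 y' G']

theorem chshA_compl_left (hnorm : Normalized22 P) (G : Finset (Fin (w y)))
    (G' : Finset (Fin (w y'))) : chshA P y y' Gᶜ G' = 1 - chshB P y y' G G' := by
  rw [chshA, chshB]
  linarith [PaG_add_PaG_compl P 0 0 y G, PaG_add_PaG_compl P 0 1 y G,
    PBm_add_PBm_compl P hnorm y G]

theorem chshB_compl_left (hnorm : Normalized22 P) (G : Finset (Fin (w y)))
    (G' : Finset (Fin (w y'))) : chshB P y y' Gᶜ G' = 1 - chshA P y y' G G' := by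
  rw [chshA, chshB]
  linarith [PaG_add_PaG_compl P 0 0 y G, PaG_add_PaG_compl P 0 1 y G,
    PBm_add_PBm_compl P hnorm y G]

theorem chshHolds_compl_left_iff (hnorm : Normalized22 P) (G : Finset (Fin (w y)))
    (G' : Finset (Fin (w y'))) : CHSHHolds P y y' Gᶜ G' ↔ CHSHHolds P y y' G G' := by
  rw [CHSHHolds, CHSHHolds, chshA_compl_left hnorm, chshB_compl_left hnorm,
    ← Set.Icc.mem_iff_one_sub_mem, ← Set.Icc.mem_iff_one_sub_mem, and_comm]

theorem chshHolds_compl_right_iff (hns : NoSignalling22 P) (G : Finset (Fin (w y)))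
    (G' : Finset (Fin (w y'))) : CHSHHolds P y y' G G'ᶜ ↔ CHSHHolds P y y' G G' := by
  rw [CHSHHolds, CHSHHolds, chshA_compl_right hns, chshB_compl_right hns, and_comm]

theorem chshHolds_empty_left (hpos : Nonneg22 P) (hnorm : Normalized22 P)
    (hns : NoSignalling22 P) (G' : Finset (Fin (w y'))) : CHSHHolds P y y' ∅ G' := by
  have hA := PaG_add_PaG_compl_mem_Icc hpos hnorm hns 0 0 1 0 y' G'
  have hB := PaG_add_PaG_compl_mem_Icc hpos hnorm hns 0 0 0 1 y' G'
  rw [CHSHHolds, chshA, chshB, PaG_empty, PaG_empty, PBm, sum_empty,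
    PAm_eq_of_noSignalling hns 0 0 y y', PAm_eq_of_noSignalling hns 0 1 y y']
  constructor
  · convert hA using 1
    linarith [PaG_add_PaG_compl P 0 0 y' G']
  · convert hB using 1
    linarith [PaG_add_PaG_compl P 0 1 y' G']

theorem chshHolds_empty_right (hpos : Nonneg22 P) (hnorm : Normalized22 P)
    (hns : NoSignalling22 P) (G : Finset (Fin (w y))) : CHSHHolds P y y' G ∅ := by
  have hA := PaG_add_PaG_compl_mem_Icc hpos hnorm hns 1 0 1 0 y G
  have hB := PaG_add_PaG_compl_mem_Icc hpos hnorm hns 1 0 0 1 y G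
  rw [CHSHHolds, chshA, chshB, PaG_empty, PaG_empty]
  constructor
  · convert hA using 1
    linarith [PaG_add_PaG_compl P 0 0 y G, PBm_eq_PaG_add_PaG hns 1 y G]
  · convert hB using 1
    linarith [PaG_add_PaG_compl P 0 1 y G, PBm_eq_PaG_add_PaG hns 0 y G]

theorem Finset.forall_add_one_lt_or_compl {m : ℕ} (G : Finset (Fin m)) :
    (∀ j ∈ G, (j : ℕ) + 1 < m) ∨ ∀ j ∈ Gᶜ, (j : ℕ) + 1 < m := by
  by_contra! h
  obtain ⟨⟨⟨j, hj⟩, hjG, hj'⟩, ⟨⟨k, hk⟩, hkG, hk'⟩⟩ := h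
  obtain rfl : j = k := by simp only at hj' hk'; omega
  exact mem_compl.mp hkG hjG

theorem chshHolds_of_liftedCHSH (hpos : Nonneg22 P) (hnorm : Normalized22 P)
    (hns : NoSignalling22 P) (hchsh : LiftedCHSH P) (hne : y ≠ y') (G : Finset (Fin (w y)))
    (G' : Finset (Fin (w y'))) : CHSHHolds P y y' G G' := by
  wlog hG : ∀ j ∈ G, (j : ℕ) + 1 < w y generalizing G
  · exact (chshHolds_compl_left_iff hnorm G G').mp
      (this Gᶜ ((Finset.forall_add_one_lt_or_compl G).resolve_left hG))
  wlog hG' : ∀ j ∈ G', (j : ℕ) + 1 < w y' generalizing G'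
  · exact (chshHolds_compl_right_iff hns G G').mp
      (this G'ᶜ ((Finset.forall_add_one_lt_or_compl G').resolve_left hG'))
  rcases G.eq_empty_or_nonempty with rfl | hGne
  · exact chshHolds_empty_left hpos hnorm hns G'
  rcases G'.eq_empty_or_nonempty with rfl | hG'ne
  · exact chshHolds_empty_right hpos hnorm hns G
  exact (liftedCHSH_iff P).mp hchsh y y' hne G G' hGne hG'ne hG hG'


theorem chsh_deterministic_mem_Icc (a₀ a₁ : Fin 2) (g g' : Prop) [Decidable g] [Decidable g'] :
    (if a₀ = 0 then 1 else 0) + (if a₀ = 1 then 1 else 0) * (if g then 1 else 0)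
      - (if a₁ = 0 then 1 else 0) * (if g then 1 else 0)
      - (if a₀ = 0 then 1 else 0) * (if g' then 1 else 0)
      + (if a₁ = 0 then 1 else 0) * (if g' then 1 else 0) ∈ Set.Icc (0 : ℝ) 1 := by
  obtain rfl | rfl : a₀ = 0 ∨ a₀ = 1 := by omega
  all_goals obtain rfl | rfl : a₁ = 0 ∨ a₁ = 1 := by omega
  all_goals by_cases hg : g <;> by_cases hg' : g' <;> simp [hg, hg']

theorem PaG_eq_sum_of_eq_sum {q : (Fin 2 → Fin 2) → ((y : Fin n) → Fin (w y)) → ℝ}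
    (hP : ∀ x y a b, P x y a b = ∑ α, ∑ β,
      q α β * (if α x = a then 1 else 0) * (if β y = b then 1 else 0))
    (a x : Fin 2) (y : Fin n) (G : Finset (Fin (w y))) :
    PaG P a x y G = ∑ α, ∑ β, q α β * (if α x = a then 1 else 0) * (if β y ∈ G then 1 else 0) := by
  simp only [PaG, hP]
  rw [sum_comm]
  refine sum_congr rfl fun α _ => ?_
  rw [sum_comm]
  refine sum_congr rfl fun β _ => ?_
  rw [← mul_sum, sum_ite_eq]

theorem chshA_mem_Icc_of_isLocal22 (hns : NoSignalling22 P) (hloc : IsLocal22 P)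
    (G : Finset (Fin (w y))) (G' : Finset (Fin (w y'))) : chshA P y y' G G' ∈ Set.Icc 0 1 := by
  obtain ⟨q, hq_nonneg, hq_sum, hP⟩ := hloc
  have hsum : chshA P y y' G G' = ∑ α, ∑ β, q α β * ((if α 0 = 0 then 1 else 0)
        + (if α 0 = 1 then 1 else 0) * (if β y ∈ G then 1 else 0)
        - (if α 1 = 0 then 1 else 0) * (if β y ∈ G then 1 else 0)
        - (if α 0 = 0 then 1 else 0) * (if β y' ∈ G' then 1 else 0)
        + (if α 1 = 0 then 1 else 0) * (if β y' ∈ G' then 1 else 0)) := by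
    simp only [chshA, PAm_eq_PaG_univ, PBm_eq_PaG_add_PaG hns 0, PaG_eq_sum_of_eq_sum hP,
      mem_univ, if_true, ← sum_add_distrib, ← sum_sub_distrib]
    exact sum_congr rfl fun α _ => sum_congr rfl fun β _ => by ring
  rw [hsum, ← Fintype.sum_prod_type']
  exact (convex_Icc 0 1).sum_mem (fun _ _ => hq_nonneg _ _) (by rwa [Fintype.sum_prod_type'])
    fun αβ _ => chsh_deterministic_mem_Icc _ _ _ _

theorem chshHolds_of_isLocal22 (hns : NoSignalling22 P) (hloc : IsLocal22 P)
    (G : Finset (Fin (w y))) (G' : Finset (Fin (w y'))) : CHSHHolds P y y' G G' :=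
  ⟨chshA_mem_Icc_of_isLocal22 hns hloc G G',
    chshA_compl_right hns G G' ▸ chshA_mem_Icc_of_isLocal22 hns hloc G G'ᶜ⟩

theorem nonneg22_of_isLocal22 (hloc : IsLocal22 P) : Nonneg22 P := by
  obtain ⟨q, hq_nonneg, -, hP⟩ := hloc
  intro x y a b
  rw [hP]
  exact sum_nonneg fun α _ => sum_nonneg fun β _ =>
    mul_nonneg (mul_nonneg (hq_nonneg α β) (by positivity)) (by positivity)

variable (P)

/-- Fréchet bounds on the probability of `A₀ = 0, A₁ = 0, B_y = b` given `P 0 y 0 b` and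
`P 1 y 0 b`; by no-signalling the lower one is `max 0 (P 0 y 0 b + P 1 y 0 b - P_B(b|y))`. -/
noncomputable def frechetLower (y : Fin n) (b : Fin (w y)) : ℝ := max 0 (P 1 y 0 b - P 0 y 1 b)

noncomputable def frechetUpper (y : Fin n) (b : Fin (w y)) : ℝ := min (P 0 y 0 b) (P 1 y 0 b)

variable {P}

theorem frechetLower_le_frechetUpper (hpos : Nonneg22 P) (hns : NoSignalling22 P) (y : Fin n)
    (b : Fin (w y)) : frechetLower P y b ≤ frechetUpper P y b := by
  have h := hns.2 y b 0 1
  simp only [Fin.sum_univ_two] at h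
  exact max_le (le_min (hpos 0 y 0 b) (hpos 1 y 0 b))
    (le_min (by linarith [hpos 1 y 1 b]) (by linarith [hpos 0 y 1 b]))

theorem sum_frechetLower_le_sum_frechetUpper (hpos : Nonneg22 P) (hnorm : Normalized22 P)
    (hns : NoSignalling22 P) (hchsh : LiftedCHSH P) (y y' : Fin n) :
    ∑ b, frechetLower P y b ≤ ∑ b, frechetUpper P y' b := by
  rcases eq_or_ne y y' with rfl | hne
  · exact sum_le_sum fun b _ => frechetLower_le_frechetUpper hpos hns y b
  set G : Finset (Fin (w y)) := {b | 0 < P 1 y 0 b - P 0 y 1 b}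
  set G' : Finset (Fin (w y')) := {b | 0 < P 0 y' 0 b - P 1 y' 0 b}
  have hL : ∑ b, frechetLower P y b = PaG P 0 1 y G - PaG P 1 0 y G := by
    simp only [frechetLower]
    rw [sum_max_zero_eq_sum_filter, sum_sub_distrib]
    rfl
  have hU : ∑ b, frechetUpper P y' b = PAm P 0 0 y' - (PaG P 0 0 y' G' - PaG P 0 1 y' G') := by
    have hmin : ∀ u v : ℝ, min u v = u - max 0 (u - v) := fun u v => by
      rcases le_total u v with h | h <;> simp [h, sub_nonpos.2, sub_nonneg.2]
    simp only [frechetUpper, hmin]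
    rw [sum_sub_distrib, sum_max_zero_eq_sum_filter, sum_sub_distrib]
    rfl
  have hA := (chshHolds_of_liftedCHSH hpos hnorm hns hchsh hne G G').1.1
  rw [chshA, PBm_eq_PaG_add_PaG hns 0, PAm_eq_of_noSignalling hns 0 0 y y'] at hA
  linarith

theorem isLocal22_of_joint (q : (Fin 2 → Fin 2) → ℝ)
    (R : (y : Fin n) → (Fin 2 → Fin 2) → Fin (w y) → ℝ) (hq_nonneg : ∀ α, 0 ≤ q α)
    (hq_sum : ∑ α, q α = 1) (hR_nonneg : ∀ y α b, 0 ≤ R y α b)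
    (hR_sum : ∀ y α, ∑ b, R y α b = q α)
    (hP : ∀ x y a b, P x y a b = ∑ α, (if α x = a then 1 else 0) * R y α b) :
    IsLocal22 P := by
  -- If `q α = 0` then `R y α = 0`, so the junk value `0 / 0 = 0` below is harmless.
  set Q : (Fin 2 → Fin 2) → ((y : Fin n) → Fin (w y)) → ℝ :=
    fun α β => q α * ∏ y, (R y α (β y) / q α)
  have hR_zero : ∀ α, q α = 0 → ∀ y b, R y α b = 0 := fun α h y b =>
    (sum_eq_zero_iff_of_nonneg fun b _ => hR_nonneg y α b).mp ((hR_sum y α).trans h) b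
      (mem_univ b)
  have hcond_sum : ∀ α, q α ≠ 0 → ∀ y, ∑ b, R y α b / q α = 1 := fun α h y => by
    rw [← sum_div, hR_sum, div_self h]
  have hQ_sum : ∀ α, ∑ β, Q α β = q α := by
    intro α
    rcases eq_or_ne (q α) 0 with h | h
    · simp [Q, h]
    · rw [← mul_sum, ← Fintype.prod_sum fun y b => R y α b / q α, prod_eq_one fun y _ => hcond_sum α h y, mul_one]
  have hQ_marginal : ∀ α y b, ∑ β, Q α β * (if β y = b then 1 else 0) = R y α b := by
    intro α y b
    rcases eq_or_ne (q α) 0 with h | h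
    · simp [Q, h, hR_zero α h y b]
    · simp only [Q, mul_assoc, ← mul_sum, Fintype.sum_prod_mul_ite_eq _ (hcond_sum α h)]
      field_simp
  refine ⟨Q, fun α β => ?_, ?_, fun x y a b => ?_⟩
  · exact mul_nonneg (hq_nonneg α)
      (prod_nonneg fun y _ => div_nonneg (hR_nonneg y α (β y)) (hq_nonneg α))
  · simp only [hQ_sum, hq_sum]
  · rw [hP]
    refine sum_congr rfl fun α _ => ?_
    rw [← hQ_marginal α y b, mul_sum]
    exact sum_congr rfl fun β _ => by ring

theorem isLocal22_of_liftedCHSH (hn : 0 < n) (hpos : Nonneg22 P) (hnorm : Normalized22 P)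
    (hns : NoSignalling22 P) (hchsh : LiftedCHSH P) : IsLocal22 P := by
  have : Nonempty (Fin n) := ⟨⟨0, hn⟩⟩
  set t := ⨆ y, ∑ b, frechetLower P y b
  have ht : ∀ y, t ∈ Set.Icc (∑ b, frechetLower P y b) (∑ b, frechetUpper P y b) := fun y =>
    ⟨le_ciSup (f := fun y => ∑ b, frechetLower P y b) (Set.finite_range _).bddAbove y,
      ciSup_le fun y' => sum_frechetLower_le_sum_frechetUpper hpos hnorm hns hchsh y' y⟩
  choose s hs_lower hs_upper hs_sum using fun y =>
    Fintype.exists_sum_eq_of_mem_Icc (frechetLower_le_frechetUpper hpos hns y) (ht y)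
  set y₀ : Fin n := ⟨0, hn⟩
  set q : (Fin 2 → Fin 2) → ℝ :=
    fun α => fineTable (PAm P 0 0 y₀) (PAm P 1 0 y₀) (PAm P 0 1 y₀) t (α 0) (α 1)
  set R : (y : Fin n) → (Fin 2 → Fin 2) → Fin (w y) → ℝ :=
    fun y α b => fineTable (P 0 y 0 b) (P 0 y 1 b) (P 1 y 0 b) (s y b) (α 0) (α 1)
  have hR_nonneg : ∀ y α b, 0 ≤ R y α b := fun y α b =>
    fineTable_nonneg ((le_max_left _ _).trans (hs_lower y b))
      ((hs_upper y b).trans (min_le_left _ _)) ((hs_upper y b).trans (min_le_right _ _))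
      ((le_max_right _ _).trans (hs_lower y b)) _ _
  have hR_sum : ∀ y α, ∑ b, R y α b = q α := fun y α => by
    simp only [R, q, sum_fineTable_apply, hs_sum, ← PAm_eq_of_noSignalling hns _ _ y y₀]
    rfl
  refine isLocal22_of_joint q R (fun α => hR_sum y₀ α ▸ sum_nonneg fun b _ => hR_nonneg y₀ α b)
    ?_ hR_nonneg hR_sum fun x y a b => ?_
  · rw [sum_fineTable_eq_add, PAm, PAm, ← Fin.sum_univ_two (fun a => ∑ b, P 0 y₀ a b)]
    exact hnorm 0 y₀
  · have h := hns.2 y b 0 1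
    simp only [Fin.sum_univ_two] at h
    simp only [R, sum_ite_mul_fineTable]
    obtain rfl | rfl : x = 0 ∨ x = 1 := by omega
    all_goals obtain rfl | rfl : a = 0 ∨ a = 1 := by omega
    all_goals simp
    linarith

end Behavior

theorem local_iff_CHSH_general
    (n : ℕ) (hn : 2 ≤ n) (w : Fin n → ℕ)
    (P : Fin 2 → (y : Fin n) → Fin 2 → Fin (w y) → ℝ)
    (hnorm : Normalized22 P) (hns : NoSignalling22 P) :
    IsLocal22 P ↔ (Nonneg22 P ∧ LiftedCHSH P) :=
  ⟨fun hloc => ⟨nonneg22_of_isLocal22 hloc,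
      fun _ _ _ G G' _ _ _ _ => chshHolds_of_isLocal22 hns hloc G G'⟩,
    fun ⟨hpos, hchsh⟩ => isLocal22_of_liftedCHSH (by omega) hpos hnorm hns hchsh⟩

/-- Theorem 1 of the paper, reformulated: a normalized, no-signalling
behavior in the scenario [(2 2),(w_1…w_n)] is local iff it is nonnegative and satisfies
all lifted CHSH inequalities. -/
theorem local_iff_CHSH
    (n : ℕ) (hn : 2 ≤ n) (w : Fin n → ℕ) (hw : ∀ y, 2 ≤ w y)
    (P : Fin 2 → (y : Fin n) → Fin 2 → Fin (w y) → ℝ)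
    (hnorm : Normalized22 P) (hns : NoSignalling22 P) :
    IsLocal22 P ↔ (Nonneg22 P ∧ LiftedCHSH P) :=
  local_iff_CHSH_general n hn w P hnorm hns
end

section
/- Let P be a local behavior in the scenario [(2 2),(w_1…w_n)] with n ≥ 2 and w_1,…,w_n ≥ 2. Then for every a ∈ {1,2}, every pair x ≠ x′ ∈ {1,2} of A's measurements, every pair y ≠ y′ of B's measurements, and arbitrary subsets G ⊆ {1,…,w_y} and G′ ⊆ {1,…,w_{y′}} of outcomes, one has 0 ≤ P_A(a|x) + P_B(G|y) − P(aG|xy) − P(aG|x′y) − P(aG′|xy′) + P(aG′|x′y′) ≤ 1. -/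
/-- every local behavior in the scenario [(2 2),(w_1…w_n)] satisfies all
(liftings of the CH form of the) CHSH inequalities: for every outcome `a` of A, every
pair `x ≠ x'` of A's measurements, every pair `y ≠ y'` of B's measurements and arbitrary
sets `G`, `G'` of outcomes of `y`, `y'` respectively,
`0 ≤ P_A(a|x) + P_B(G|y) − P(aG|xy) − P(aG|x′y) − P(aG′|xy′) + P(aG′|x′y′) ≤ 1`. -/
theorem local_satisfies_CHSH
    (n : ℕ) (hn : 2 ≤ n) (w : Fin n → ℕ) (hw : ∀ y, 2 ≤ w y)
    (P : Fin 2 → (y : Fin n) → Fin 2 → Fin (w y) → ℝ)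
    (hloc : IsLocal22 P) :
    ∀ (a : Fin 2) (x x' : Fin 2), x ≠ x' → ∀ (y y' : Fin n), y ≠ y' →
    ∀ (G : Finset (Fin (w y))) (G' : Finset (Fin (w y'))),
      0 ≤ PAm P a x y + PBm P y G - PaG P a x y G - PaG P a x' y G
            - PaG P a x y' G' + PaG P a x' y' G' ∧
      PAm P a x y + PBm P y G - PaG P a x y G - PaG P a x' y G
            - PaG P a x y' G' + PaG P a x' y' G' ≤ 1 := by

  obtain ⟨q, hq0, hq1, hP⟩ := hloc
  intro a x x' hxx' y y' hyy' G G'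
  have hPaG : ∀ (a x : Fin 2) (z : Fin n) (S : Finset (Fin (w z))),
      PaG P a x z S = ∑ α, ∑ β, q α β * (if α x = a then (1:ℝ) else 0) *
        (if β z ∈ S then 1 else 0) := by
    intro a x z S
    unfold PaG
    simp_rw [hP]
    rw [Finset.sum_comm]
    refine Finset.sum_congr rfl fun α _ => ?_
    rw [Finset.sum_comm]
    refine Finset.sum_congr rfl fun β _ => ?_
    rw [← Finset.mul_sum, Finset.sum_ite_eq S (β z) (fun _ => (1:ℝ))]
  have hPAm : PAm P a x y = ∑ α, ∑ β, q α β * (if α x = a then (1:ℝ) else 0) := by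
    have := hPaG a x y Finset.univ
    simp only [Finset.mem_univ, if_true, mul_one] at this
    exact this
  have hPBm : PBm P y G = ∑ α, ∑ β, q α β * (if β y ∈ G then (1:ℝ) else 0) := by
    have h1 : PBm P y G = ∑ a' : Fin 2, PaG P a' 0 y G := by
      unfold PBm PaG; rw [Finset.sum_comm]
    rw [h1]
    simp_rw [hPaG]
    rw [Finset.sum_comm]
    refine Finset.sum_congr rfl fun α _ => ?_
    rw [Finset.sum_comm]
    refine Finset.sum_congr rfl fun β _ => ?_
    rw [← Finset.sum_mul, ← Finset.mul_sum, Fintype.sum_ite_eq (α 0) (fun _ => (1:ℝ)), mul_one]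
  set u := fun (α : Fin 2 → Fin 2) => if α x = a then (1:ℝ) else 0 with hu
  set v := fun (α : Fin 2 → Fin 2) => if α x' = a then (1:ℝ) else 0 with hv
  set s := fun (β : (t : Fin n) → Fin (w t)) => if β y ∈ G then (1:ℝ) else 0 with hs
  set t := fun (β : (t : Fin n) → Fin (w t)) => if β y' ∈ G' then (1:ℝ) else 0 with ht
  have expand : PAm P a x y + PBm P y G - PaG P a x y G - PaG P a x' y G
            - PaG P a x y' G' + PaG P a x' y' G'
      = ∑ α, ∑ β, q α β * (u α + s β - u α * s β - v α * s β - u α * t β + v α * t β) := by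
    rw [hPAm, hPBm, hPaG a x y G, hPaG a x' y G, hPaG a x y' G', hPaG a x' y' G']
    simp only [← Finset.sum_add_distrib, ← Finset.sum_sub_distrib]
    refine Finset.sum_congr rfl fun α _ => ?_
    refine Finset.sum_congr rfl fun β _ => ?_
    ring
  have hF0 : ∀ α β, 0 ≤ u α + s β - u α * s β - v α * s β - u α * t β + v α * t β := by
    intro α β
    simp only [hu, hv, hs, ht]
    split_ifs <;> norm_num
  have hF1 : ∀ α β, u α + s β - u α * s β - v α * s β - u α * t β + v α * t β ≤ 1 := by
    intro α β
    simp only [hu, hv, hs, ht]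
    split_ifs <;> norm_num
  rw [expand]
  constructor
  · refine Finset.sum_nonneg fun α _ => Finset.sum_nonneg fun β _ => ?_
    exact mul_nonneg (hq0 α β) (hF0 α β)
  · calc (∑ α, ∑ β, q α β * (u α + s β - u α * s β - v α * s β - u α * t β + v α * t β))
        ≤ ∑ α, ∑ β, q α β := by
          refine Finset.sum_le_sum fun α _ => Finset.sum_le_sum fun β _ => ?_
          exact mul_le_of_le_one_right (hq0 α β) (hF1 α β)
      _ = 1 := hq1
end

section
/- Let P be a nonnegative, no-signalling behavior in the scenario [(2 2),(w_1…w_n)], fix a measurement y of B with w_y outcomes, and fix 1 ≤ b ≤ w_y − 2. Suppose T ∈ ℝ satisfies, for every subset G ⊆ {1,…,b+1}: T ≥ −P_B(G|y) + P(1G|1y) + P(1G|2y) and T ≤ P(1G|1y) + P(1(Ḡ)|2y), where Ḡ := {1,…,b+1}∖G. Then there exists S ∈ ℝ such that: for every G ⊆ {1,…,b}, S ≥ −P_B(G|y) + P(1G|1y) + P(1G|2y) and S ≤ P(1G|1y) + P(1({1,…,b}∖G)|2y); moreover S ≥ T − P(1(b+1)|1y), S ≥ T − P(1(b+1)|2y),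 S ≤ T, and S ≤ T + P_B(b+1|y) − P(1(b+1)|1y) − P(1(b+1)|2y). -/
/-- the Fourier–Motzkin induction step: let `P` be a nonnegative,
no-signalling behavior in the scenario [(2 2),(w_1…w_n)], fix a measurement `y` of B and
`1 ≤ b ≤ w_y − 2`.  Outcomes `{1,…,b+1}` of the paper correspond to the indices
`j : Fin (w y)` with `(j:ℕ) ≤ b`, outcomes `{1,…,b}` to indices with `(j:ℕ) < b`, and
the single outcome `b+1` to the index `⟨b, _⟩`.  If `T ∈ ℝ` satisfies, for every
`G ⊆ {1,…,b+1}`, `T ≥ −P_B(G|y) + P(1G|1y) + P(1G|2y)` and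
`T ≤ P(1G|1y) + P(1({1,…,b+1}∖G)|2y)`, then there exists `S ∈ ℝ` such that for every
`G ⊆ {1,…,b}`, `S ≥ −P_B(G|y) + P(1G|1y) + P(1G|2y)` and
`S ≤ P(1G|1y) + P(1({1,…,b}∖G)|2y)`, and moreover `S ≥ T − P(1(b+1)|1y)`,
`S ≥ T − P(1(b+1)|2y)`, `S ≤ T` and
`S ≤ T + P_B(b+1|y) − P(1(b+1)|1y) − P(1(b+1)|2y)`. -/
theorem fourier_motzkin_step
    (n : ℕ) (w : Fin n → ℕ)
    (P : Fin 2 → (y : Fin n) → Fin 2 → Fin (w y) → ℝ)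
    (hpos : Nonneg22 P) (hns : NoSignalling22 P)
    (y : Fin n) (b : ℕ) (hb1 : 1 ≤ b) (hb2 : b + 2 ≤ w y)
    (T : ℝ)
    (hT1 : ∀ G : Finset (Fin (w y)), (∀ j ∈ G, (j : ℕ) ≤ b) →
      -PBm P y G + PaG P 0 0 y G + PaG P 0 1 y G ≤ T)
    (hT2 : ∀ G : Finset (Fin (w y)), (∀ j ∈ G, (j : ℕ) ≤ b) →
      T ≤ PaG P 0 0 y G
          + PaG P 0 1 y ((Finset.univ.filter (fun j : Fin (w y) => (j : ℕ) ≤ b)) \ G)) :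
    ∃ S : ℝ,
      (∀ G : Finset (Fin (w y)), (∀ j ∈ G, (j : ℕ) < b) →
        (-PBm P y G + PaG P 0 0 y G + PaG P 0 1 y G ≤ S ∧
         S ≤ PaG P 0 0 y G
             + PaG P 0 1 y ((Finset.univ.filter (fun j : Fin (w y) => (j : ℕ) < b)) \ G))) ∧
      T - P 0 y 0 ⟨b, by omega⟩ ≤ S ∧
      T - P 1 y 0 ⟨b, by omega⟩ ≤ S ∧
      S ≤ T ∧
      S ≤ T + (∑ a, P 0 y a ⟨b, by omega⟩) - P 0 y 0 ⟨b, by omega⟩ - P 1 y 0 ⟨b, by omega⟩ := by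
  classical
  set e : Fin (w y) := ⟨b, by omega⟩ with he
  have hns2 : ∀ j : Fin (w y), P 0 y 0 j + P 0 y 1 j = P 1 y 0 j + P 1 y 1 j := by
    intro j
    simpa [Fin.sum_univ_two] using hns.2 y j 0 1
  set B : Finset (Fin (w y)) := Finset.univ.filter (fun j : Fin (w y) => (j : ℕ) < b)
    with hBdef
  set B' : Finset (Fin (w y)) := Finset.univ.filter (fun j : Fin (w y) => (j : ℕ) ≤ b)
    with hB'def
  have heB : e ∉ B := by simp [hBdef, he]
  have hB'insert : B' = insert e B := by
    ext j
    simp only [hBdef, hB'def, Finset.mem_filter, Finset.mem_univ, true_and,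
      Finset.mem_insert, he, Fin.ext_iff]
    omega
  -- single-outcome probabilities at outcome e
  set p0 : ℝ := P 0 y 0 e with hp0
  set p1 : ℝ := P 1 y 0 e with hp1
  have hq : (∑ a, P 0 y a e) = p0 + P 0 y 1 e := by
    simp [Fin.sum_univ_two, hp0]
  -- lower-bound form
  have hL : ∀ G : Finset (Fin (w y)),
      -PBm P y G + PaG P 0 0 y G + PaG P 0 1 y G
        = ∑ j ∈ G, (P 1 y 0 j - P 0 y 1 j) := by
    intro G
    simp only [PBm, PaG, Fin.sum_univ_two, Finset.sum_add_distrib,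
      Finset.sum_sub_distrib]
    ring
  -- upper-bound function
  set u : Finset (Fin (w y)) → ℝ :=
    fun G => PaG P 0 0 y G + PaG P 0 1 y (B \ G) with hu
  -- key pairwise inequality L(G) ≤ u(G')
  have lemA : ∀ G G' : Finset (Fin (w y)), G ⊆ B → G' ⊆ B →
      (∑ j ∈ G, (P 1 y 0 j - P 0 y 1 j)) ≤ u G' := by
    intro G G' hG hG'
    rw [← Finset.sum_inter_add_sum_sdiff G G' (fun j => P 1 y 0 j - P 0 y 1 j)]
    have h1 : ∑ j ∈ G ∩ G', (P 1 y 0 j - P 0 y 1 j) ≤ ∑ j ∈ G', P 0 y 0 j := by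
      calc ∑ j ∈ G ∩ G', (P 1 y 0 j - P 0 y 1 j) ≤ ∑ j ∈ G ∩ G', P 0 y 0 j :=
            Finset.sum_le_sum (fun j _ => by
              have := hns2 j; have := hpos 1 y 1 j; linarith)
        _ ≤ ∑ j ∈ G', P 0 y 0 j :=
            Finset.sum_le_sum_of_subset_of_nonneg Finset.inter_subset_right
              (fun j _ _ => hpos 0 y 0 j)
    have h2 : ∑ j ∈ G \ G', (P 1 y 0 j - P 0 y 1 j) ≤ ∑ j ∈ B \ G', P 1 y 0 j := by
      calc ∑ j ∈ G \ G', (P 1 y 0 j - P 0 y 1 j) ≤ ∑ j ∈ G \ G', P 1 y 0 j :=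
            Finset.sum_le_sum (fun j _ => by
              have := hpos 0 y 1 j; linarith)
        _ ≤ ∑ j ∈ B \ G', P 1 y 0 j :=
            Finset.sum_le_sum_of_subset_of_nonneg
              (Finset.sdiff_subset_sdiff hG (le_refl _))
              (fun j _ _ => hpos 1 y 0 j)
    have : u G' = (∑ j ∈ G', P 0 y 0 j) + ∑ j ∈ B \ G', P 1 y 0 j := by
      simp [hu, PaG]
    linarith
  -- L(G) ≤ T
  have lemE : ∀ G : Finset (Fin (w y)), G ⊆ B →
      (∑ j ∈ G, (P 1 y 0 j - P 0 y 1 j)) ≤ T := by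
    intro G hG
    rw [← hL]
    refine hT1 G (fun j hj => ?_)
    have := hG hj
    simp only [hBdef, Finset.mem_filter] at this
    omega
  -- L(G) ≤ T + q - p0 - p1
  have lemD : ∀ G : Finset (Fin (w y)), G ⊆ B →
      (∑ j ∈ G, (P 1 y 0 j - P 0 y 1 j)) ≤ T + (p0 + P 0 y 1 e) - p0 - p1 := by
    intro G hG
    have heG : e ∉ G := fun h => heB (hG h)
    have h1 := hT1 (insert e G) (fun j hj => by
      rcases Finset.mem_insert.mp hj with h | h
      · simp [h, he]
      · have := hG h
        simp only [hBdef, Finset.mem_filter] at this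
        omega)
    rw [hL, Finset.sum_insert heG] at h1
    have : P 1 y 0 e = p1 := rfl
    linarith
  -- T - p0 ≤ u(G')
  have lemB : ∀ G' : Finset (Fin (w y)), G' ⊆ B → T - p0 ≤ u G' := by
    intro G' hG'
    have heG' : e ∉ G' := fun h => heB (hG' h)
    have h1 := hT2 (insert e G') (fun j hj => by
      rcases Finset.mem_insert.mp hj with h | h
      · simp [h, he]
      · have := hG' h
        simp only [hBdef, Finset.mem_filter] at this
        omega)
    have hsd : B' \ insert e G' = B \ G' := by
      ext j
      simp only [Finset.mem_sdiff, Finset.mem_insert, hB'insert, not_or]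
      constructor
      · rintro ⟨h1, h2, h3⟩
        exact ⟨h1.resolve_left h2, h3⟩
      · rintro ⟨h1, h2⟩
        exact ⟨Or.inr h1, fun hje => heB (hje ▸ h1), h2⟩
    rw [hsd] at h1
    have h2 : PaG P 0 0 y (insert e G') = p0 + PaG P 0 0 y G' := by
      simp [PaG, Finset.sum_insert heG', hp0]
    have : u G' = PaG P 0 0 y G' + PaG P 0 1 y (B \ G') := rfl
    linarith
  -- T - p1 ≤ u(G')
  have lemC : ∀ G' : Finset (Fin (w y)), G' ⊆ B → T - p1 ≤ u G' := by
    intro G' hG'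
    have heG' : e ∉ G' := fun h => heB (hG' h)
    have h1 := hT2 G' (fun j hj => by
      have := hG' hj
      simp only [hBdef, Finset.mem_filter] at this
      omega)
    have hsd : B' \ G' = insert e (B \ G') := by
      rw [hB'insert, Finset.insert_sdiff_of_notMem _ heG']
    have heBG : e ∉ B \ G' := fun h => heB (Finset.mem_sdiff.mp h).1
    rw [hsd] at h1
    have h2 : PaG P 0 1 y (insert e (B \ G')) = p1 + PaG P 0 1 y (B \ G') := by
      simp [PaG, Finset.sum_insert heBG, hp1]
    have : u G' = PaG P 0 0 y G' + PaG P 0 1 y (B \ G') := rfl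
    linarith
  -- define S
  have hne : (B.powerset).Nonempty := ⟨∅, Finset.mem_powerset.mpr (Finset.empty_subset _)⟩
  set S : ℝ := min (min T (T + (p0 + P 0 y 1 e) - p0 - p1)) (B.powerset.inf' hne u)
    with hS
  have hq01 : 0 ≤ P 0 y 1 e := hpos 0 y 1 e
  have hq11 : 0 ≤ P 1 y 1 e := hpos 1 y 1 e
  have hp0n : 0 ≤ p0 := hpos 0 y 0 e
  have hp1n : 0 ≤ p1 := hpos 1 y 0 e
  have hnse : p0 + P 0 y 1 e = p1 + P 1 y 1 e := hns2 e
  refine ⟨S, fun G hG => ?_, ?_, ?_, ?_, ?_⟩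
  · have hGB : G ⊆ B := fun j hj => by
      simp only [hBdef, Finset.mem_filter, Finset.mem_univ, true_and]
      exact hG j hj
    constructor
    · rw [hL]
      refine le_min (le_min (lemE G hGB) (lemD G hGB)) ?_
      exact Finset.le_inf' hne u (fun G' hG' =>
        lemA G G' hGB (Finset.mem_powerset.mp hG'))
    · calc S ≤ B.powerset.inf' hne u := min_le_right _ _
        _ ≤ u G := Finset.inf'_le u (Finset.mem_powerset.mpr hGB)
  · -- T - p0 ≤ S
    show T - p0 ≤ S
    refine le_min (le_min (by linarith) (by linarith)) ?_
    exact Finset.le_inf' hne u (fun G' hG' => lemB G' (Finset.mem_powerset.mp hG'))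
  · -- T - p1 ≤ S
    show T - p1 ≤ S
    refine le_min (le_min (by linarith) (by linarith)) ?_
    exact Finset.le_inf' hne u (fun G' hG' => lemC G' (Finset.mem_powerset.mp hG'))
  · exact le_trans (min_le_left _ _) (min_le_left _ _)
  · show S ≤ T + (∑ a, P 0 y a e) - p0 - p1
    rw [hq]
    exact le_trans (min_le_left _ _) (min_le_right _ _)
end

section
/- Let P be a nonnegative, normalized, no-signalling behavior in the scenario [(2 2),(w_1…w_n)] with n ≥ 2 and w_1,…,w_n ≥ 2. Then the following are equivalent: (a) there exists a real number p such that for every measurement y of B and every (possibly empty) subset G ⊆ {1,…,w_y−1}: p ≥ −P_B(G|y) + P(1G|1y) + P(1G|2y); p ≥ −1 + P_A(1|1) + P_A(1|2) + P_B(G|y) − P(1G|1y) − P(1G|2y); p ≤ P_A(1|1) − P(1G|1y) + P(1G|2y); and p ≤ P_A(1|2) + P(1G|1y) − P(1G|2y); (b) P satisfies all lifted CHSH inequalities. -/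
lemma sum_ite_split {m : ℕ} (t : Finset (Fin m)) (f g : Fin m → ℝ) :
    ∑ b, (if b ∈ t then f b else g b) = (∑ b, g b) + ∑ b ∈ t, (f b - g b) := by
  have h : ∀ b : Fin m, (if b ∈ t then f b else g b) = g b + (if b ∈ t then f b - g b else 0) := by
    intro b; split <;> ring
  simp_rw [h, Finset.sum_add_distrib, Finset.sum_ite_mem, Finset.univ_inter]

lemma key11 {n : ℕ} {w : Fin n → ℕ} (P : Fin 2 → (y : Fin n) → Fin 2 → Fin (w y) → ℝ)
    (hpos : Nonneg22 P) (hns : NoSignalling22 P) (y : Fin n) (G G' : Finset (Fin (w y))) :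
    -PBm P y G + PaG P 0 0 y G + PaG P 0 1 y G
      ≤ PAm P 0 0 y - PaG P 0 0 y G' + PaG P 0 1 y G' := by
  have hsum : (0:ℝ) ≤ ∑ b, ((if b ∈ G' then P 1 y 0 b else P 0 y 0 b)
      + (if b ∈ G then P 0 y 1 b - P 1 y 0 b else 0)) := by
    refine Finset.sum_nonneg fun b _ => ?_
    have hx : P 0 y 0 b + P 0 y 1 b = P 1 y 0 b + P 1 y 1 b := by
      have := hns.2 y b 0 1; simpa [Fin.sum_univ_two] using this
    have h1 := hpos 0 y 0 b; have h2 := hpos 0 y 1 b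
    have h3 := hpos 1 y 0 b; have h4 := hpos 1 y 1 b
    by_cases m1 : b ∈ G <;> by_cases m2 : b ∈ G' <;> simp [m1, m2] <;> linarith
  rw [Finset.sum_add_distrib, sum_ite_split,
    show (fun b => if b ∈ G then P 0 y 1 b - P 1 y 0 b else 0)
      = (fun b => if b ∈ G then P 0 y 1 b - P 1 y 0 b else (fun _ => (0:ℝ)) b) from rfl,
    sum_ite_split] at hsum
  unfold PAm PBm PaG
  simp only [Fin.sum_univ_two, Finset.sum_sub_distrib, Finset.sum_add_distrib,
    Finset.sum_const_zero, sub_zero, add_zero, zero_add] at hsum ⊢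
  linarith
lemma key12 {n : ℕ} {w : Fin n → ℕ} (P : Fin 2 → (y : Fin n) → Fin 2 → Fin (w y) → ℝ)
    (hpos : Nonneg22 P) (hns : NoSignalling22 P) (y : Fin n) (G G' : Finset (Fin (w y))) :
    -PBm P y G + PaG P 0 0 y G + PaG P 0 1 y G
      ≤ PAm P 0 1 y + PaG P 0 0 y G' - PaG P 0 1 y G' := by
  have hsum : (0:ℝ) ≤ ∑ b, ((if b ∈ G' then P 0 y 0 b else P 1 y 0 b)
      + (if b ∈ G then P 0 y 1 b - P 1 y 0 b else 0)) := by
    refine Finset.sum_nonneg fun b _ => ?_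
    have hx : P 0 y 0 b + P 0 y 1 b = P 1 y 0 b + P 1 y 1 b := by
      have := hns.2 y b 0 1; simpa [Fin.sum_univ_two] using this
    have h1 := hpos 0 y 0 b; have h2 := hpos 0 y 1 b
    have h3 := hpos 1 y 0 b; have h4 := hpos 1 y 1 b
    by_cases m1 : b ∈ G <;> by_cases m2 : b ∈ G' <;> simp [m1, m2] <;> linarith
  rw [Finset.sum_add_distrib, sum_ite_split,
    show (fun b => if b ∈ G then P 0 y 1 b - P 1 y 0 b else 0)
      = (fun b => if b ∈ G then P 0 y 1 b - P 1 y 0 b else (fun _ => (0:ℝ)) b) from rfl,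
    sum_ite_split] at hsum
  unfold PAm PBm PaG
  simp only [Fin.sum_univ_two, Finset.sum_sub_distrib, Finset.sum_add_distrib,
    Finset.sum_const_zero, sub_zero, add_zero, zero_add] at hsum ⊢
  linarith

lemma key21 {n : ℕ} {w : Fin n → ℕ} (P : Fin 2 → (y : Fin n) → Fin 2 → Fin (w y) → ℝ)
    (hpos : Nonneg22 P) (hnorm : Normalized22 P) (hns : NoSignalling22 P)
    (y : Fin n) (G G' : Finset (Fin (w y))) :
    -1 + PAm P 0 0 y + PAm P 0 1 y + PBm P y G - PaG P 0 0 y G - PaG P 0 1 y G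
      ≤ PAm P 0 0 y - PaG P 0 0 y G' + PaG P 0 1 y G' := by
  have hn1 : (∑ b, P 0 y 0 b) + (∑ b, P 0 y 1 b) = 1 := by
    have := hnorm 0 y; simpa [Fin.sum_univ_two] using this
  have hsum : (0:ℝ) ≤ ∑ b, ((if b ∈ G' then P 1 y 0 b else P 0 y 0 b)
      + (if b ∈ G then 0 else P 0 y 1 b - P 1 y 0 b)) := by
    refine Finset.sum_nonneg fun b _ => ?_
    have hx : P 0 y 0 b + P 0 y 1 b = P 1 y 0 b + P 1 y 1 b := by
      have := hns.2 y b 0 1; simpa [Fin.sum_univ_two] using this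
    have h1 := hpos 0 y 0 b; have h2 := hpos 0 y 1 b
    have h3 := hpos 1 y 0 b; have h4 := hpos 1 y 1 b
    by_cases m1 : b ∈ G <;> by_cases m2 : b ∈ G' <;> simp [m1, m2] <;> linarith
  rw [Finset.sum_add_distrib, sum_ite_split,
    show (fun b => if b ∈ G then (0:ℝ) else P 0 y 1 b - P 1 y 0 b)
      = (fun b => if b ∈ G then (fun _ => (0:ℝ)) b else P 0 y 1 b - P 1 y 0 b) from rfl,
    sum_ite_split] at hsum
  unfold PAm PBm PaG
  simp only [Fin.sum_univ_two, Finset.sum_sub_distrib, Finset.sum_add_distrib,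
    Finset.sum_const_zero, sub_zero, zero_sub, add_zero, zero_add, Finset.sum_neg_distrib] at hsum ⊢
  linarith

lemma key22 {n : ℕ} {w : Fin n → ℕ} (P : Fin 2 → (y : Fin n) → Fin 2 → Fin (w y) → ℝ)
    (hpos : Nonneg22 P) (hnorm : Normalized22 P) (hns : NoSignalling22 P)
    (y : Fin n) (G G' : Finset (Fin (w y))) :
    -1 + PAm P 0 0 y + PAm P 0 1 y + PBm P y G - PaG P 0 0 y G - PaG P 0 1 y G
      ≤ PAm P 0 1 y + PaG P 0 0 y G' - PaG P 0 1 y G' := by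
  have hn1 : (∑ b, P 0 y 0 b) + (∑ b, P 0 y 1 b) = 1 := by
    have := hnorm 0 y; simpa [Fin.sum_univ_two] using this
  have hsum : (0:ℝ) ≤ ∑ b, ((if b ∈ G' then P 0 y 0 b else P 1 y 0 b)
      + (if b ∈ G then 0 else P 0 y 1 b - P 1 y 0 b)) := by
    refine Finset.sum_nonneg fun b _ => ?_
    have hx : P 0 y 0 b + P 0 y 1 b = P 1 y 0 b + P 1 y 1 b := by
      have := hns.2 y b 0 1; simpa [Fin.sum_univ_two] using this
    have h1 := hpos 0 y 0 b; have h2 := hpos 0 y 1 b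
    have h3 := hpos 1 y 0 b; have h4 := hpos 1 y 1 b
    by_cases m1 : b ∈ G <;> by_cases m2 : b ∈ G' <;> simp [m1, m2] <;> linarith
  rw [Finset.sum_add_distrib, sum_ite_split,
    show (fun b => if b ∈ G then (0:ℝ) else P 0 y 1 b - P 1 y 0 b)
      = (fun b => if b ∈ G then (fun _ => (0:ℝ)) b else P 0 y 1 b - P 1 y 0 b) from rfl,
    sum_ite_split] at hsum
  unfold PAm PBm PaG
  simp only [Fin.sum_univ_two, Finset.sum_sub_distrib, Finset.sum_add_distrib,
    Finset.sum_const_zero, sub_zero, zero_sub, add_zero, zero_add, Finset.sum_neg_distrib] at hsum ⊢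
  linarith

/-- the final elimination step, of the variable `P(11)`: for a nonnegative,
normalized, no-signalling behavior `P` in the scenario [(2 2),(w_1…w_n)], there exists a
real number `p` satisfying, for every measurement `y` of B and every (possibly empty)
`G ⊆ {1,…,w_y−1}` (encoded as the indices `j : Fin (w y)` with `(j:ℕ)+1 < w y`),
`p ≥ −P_B(G|y) + P(1G|1y) + P(1G|2y)`,
`p ≥ −1 + P_A(1|1) + P_A(1|2) + P_B(G|y) − P(1G|1y) − P(1G|2y)`,
`p ≤ P_A(1|1) − P(1G|1y) + P(1G|2y)` and `p ≤ P_A(1|2) + P(1G|1y) − P(1G|2y)`,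
if and only if `P` satisfies all lifted CHSH inequalities. -/
theorem elimination_iff_CHSH
    (n : ℕ) (hn : 2 ≤ n) (w : Fin n → ℕ) (hw : ∀ y, 2 ≤ w y)
    (P : Fin 2 → (y : Fin n) → Fin 2 → Fin (w y) → ℝ)
    (hpos : Nonneg22 P) (hnorm : Normalized22 P) (hns : NoSignalling22 P) :
    (∃ p : ℝ, ∀ (y : Fin n) (G : Finset (Fin (w y))), (∀ j ∈ G, (j : ℕ) + 1 < w y) →
      (-PBm P y G + PaG P 0 0 y G + PaG P 0 1 y G ≤ p ∧
       -1 + PAm P 0 0 y + PAm P 0 1 y + PBm P y G - PaG P 0 0 y G - PaG P 0 1 y G ≤ p ∧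
       p ≤ PAm P 0 0 y - PaG P 0 0 y G + PaG P 0 1 y G ∧
       p ≤ PAm P 0 1 y + PaG P 0 0 y G - PaG P 0 1 y G))
    ↔ LiftedCHSH P := by
  classical
  have ePA : ∀ (a x : Fin 2) (y y' : Fin n), PAm P a x y = PAm P a x y' :=
    fun a x y y' => hns.1 x a y y'
  constructor
  · rintro ⟨p, hp⟩ y y' hyy' G G' hGne hG'ne hGr hG'r
    obtain ⟨l1, l2, u1, u2⟩ := hp y G hGr
    obtain ⟨l1', l2', u1', u2'⟩ := hp y' G' hG'r
    have e0 := ePA 0 0 y y'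
    have e1 := ePA 0 1 y y'
    exact ⟨⟨by linarith, by linarith⟩, ⟨by linarith, by linarith⟩⟩
  · intro hC
    set T := (Σ y : Fin n, Finset (Fin (w y))) × Bool with hT
    set low : T → ℝ := fun z =>
      cond z.2
        (-1 + PAm P 0 0 z.1.1 + PAm P 0 1 z.1.1 + PBm P z.1.1 z.1.2
          - PaG P 0 0 z.1.1 z.1.2 - PaG P 0 1 z.1.1 z.1.2)
        (-PBm P z.1.1 z.1.2 + PaG P 0 0 z.1.1 z.1.2 + PaG P 0 1 z.1.1 z.1.2) with hlow
    set S : Finset T :=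
      Finset.univ.filter (fun z => ∀ j ∈ z.1.2, (j : ℕ) + 1 < w z.1.1) with hS
    have hSne : S.Nonempty := by
      refine ⟨⟨⟨⟨0, by omega⟩, ∅⟩, false⟩, ?_⟩
      simp [hS]
    refine ⟨S.sup' hSne low, fun y G hGr => ?_⟩
    have memF : (⟨⟨y, G⟩, false⟩ : T) ∈ S := by simp only [hS, Finset.mem_filter, Finset.mem_univ, true_and]; exact hGr
    have memT : (⟨⟨y, G⟩, true⟩ : T) ∈ S := by simp only [hS, Finset.mem_filter, Finset.mem_univ, true_and]; exact hGr
    -- the two upper bounds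
    have hup : ∀ z ∈ S,
        low z ≤ PAm P 0 0 y - PaG P 0 0 y G + PaG P 0 1 y G ∧
        low z ≤ PAm P 0 1 y + PaG P 0 0 y G - PaG P 0 1 y G := by
      rintro ⟨⟨y'', G''⟩, i⟩ hz
      have hG''r : ∀ j ∈ G'', (j : ℕ) + 1 < w y'' := by
        simpa [hS] using hz
      by_cases hy : y'' = y
      · subst hy
        cases i
        · exact ⟨key11 P hpos hns y'' G'' G, key12 P hpos hns y'' G'' G⟩
        · exact ⟨key21 P hpos hnorm hns y'' G'' G, key22 P hpos hnorm hns y'' G'' G⟩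
      · have e0 := ePA 0 0 y'' y
        have e1 := ePA 0 1 y'' y
        rcases G''.eq_empty_or_nonempty with hGe | hG''ne
        · subst hGe
          have k1 := key11 P hpos hns y (∅ : Finset (Fin (w y))) G
          have k2 := key21 P hpos hnorm hns y (∅ : Finset (Fin (w y))) G
          have k3 := key12 P hpos hns y (∅ : Finset (Fin (w y))) G
          have k4 := key22 P hpos hnorm hns y (∅ : Finset (Fin (w y))) G
          cases i <;>
            simp only [hlow, cond_false, cond_true, PBm, PaG, Finset.sum_empty] <;>
            simp only [PBm, PaG, Finset.sum_empty] at k1 k2 k3 k4 <;>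
            constructor <;> linarith
        · rcases G.eq_empty_or_nonempty with hGe | hGne
          · subst hGe
            have k1 := key11 P hpos hns y'' G'' (∅ : Finset (Fin (w y'')))
            have k2 := key21 P hpos hnorm hns y'' G'' (∅ : Finset (Fin (w y'')))
            have k3 := key12 P hpos hns y'' G'' (∅ : Finset (Fin (w y'')))
            have k4 := key22 P hpos hnorm hns y'' G'' (∅ : Finset (Fin (w y'')))
            cases i <;>
              simp only [hlow, cond_false, cond_true, PBm, PaG, Finset.sum_empty] <;>
              simp only [PBm, PaG, Finset.sum_empty] at k1 k2 k3 k4 <;>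
              constructor <;> linarith
          · obtain ⟨⟨cA0, cA1⟩, cB0, cB1⟩ := hC y'' y hy G'' G hG''ne hGne hG''r hGr
            cases i
            · exact ⟨by simp only [hlow, cond_false]; linarith,
                     by simp only [hlow, cond_false]; linarith⟩
            · exact ⟨by simp only [hlow, cond_true]; linarith,
                     by simp only [hlow, cond_true]; linarith⟩
    refine ⟨?_, ?_, ?_, ?_⟩
    · exact Finset.le_sup' low memF
    · exact Finset.le_sup' low memT
    · exact Finset.sup'_le hSne low fun z hz => (hup z hz).1
    · exact Finset.sup'_le hSne low fun z hz => (hup z hz).2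
end
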